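/- arXiv:2410.13821 — 2 statements merged into one kernel-verified Lean document; each statement's English description precedes it below -/
import Mathlib

section
/- (Lyapunov property of the generalized Kuramoto model) Let x_i : R → R^N for i = 1,…,C satisfy ẋ_i = Ω x_i + Proj_{x_i}(c_i + ∑_j J_{ij} x_j) with ||x_i(t)|| = 1, where J_{ij} = J_{ji} ∈ R are symmetric scalar couplings, Ω is a skew-symmetric N×N matrix shared by all oscillators, and Ω c_i = 0 for each i. Then the energy E(x) = -(1/2) ∑_{i,j} J_{ij} ⟨x_i, x_j⟩ - ∑_i ⟨c_i, x_i⟩ is non-increasing along trajectories: dE/dt ≤ 0. -/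
/-!
Along the flow, the energy changes at rate `-∑ i, ⟪ẋ i, y i⟫`, where `y i = c i + ∑ j, J i j • x j`
is the local field (this uses the symmetry of `J`). The rotational part `Ω x i` of the velocity
contributes nothing: by skew-symmetry of `Ω`, `Ω c i = 0` and symmetry of `J`, the double sum
`∑ i j, J i j ⟪Ω x i, x j⟫` equals its own negative. The remaining part is the tangential
projection of `y i`, and `⟪y - ⟪y, x⟫ • x, y⟫ = ‖y‖² - ⟪y, x⟫² ≥ 0` for a unit vector `x`.
-/

open Matrix

open scoped RealInnerProductSpace

namespace Kuramoto

variable {ι E : Type*} [Fintype ι] [NormedAddCommGroup E] [InnerProductSpace ℝ E]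

noncomputable def energy (J : Matrix ι ι ℝ) (c x : ι → E) : ℝ :=
  -(1 / 2) * ∑ i, ∑ j, J i j * ⟪x i, x j⟫ - ∑ i, ⟪c i, x i⟫

def localField (J : Matrix ι ι ℝ) (c x : ι → E) (i : ι) : E :=
  c i + ∑ j, J i j • x j

def velocity (A : E →ₗ[ℝ] E) (J : Matrix ι ι ℝ) (c x : ι → E) (i : ι) : E :=
  A (x i) + (localField J c x i - ⟪localField J c x i, x i⟫ • x i)

lemma inner_localField (J : Matrix ι ι ℝ) (c x : ι → E) (i : ι) (w : E) :
    ⟪w, localField J c x i⟫ = ⟪w, c i⟫ + ∑ j, J i j * ⟪w, x j⟫ := by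
  simp only [localField, inner_add_right, inner_sum, real_inner_smul_right]

lemma sum_sum_mul_inner_comm {J : Matrix ι ι ℝ} (hJ : ∀ i j, J i j = J j i) (u w : ι → E) :
    ∑ i, ∑ j, J i j * ⟪u i, w j⟫ = ∑ i, ∑ j, J i j * ⟪w i, u j⟫ := by
  rw [Finset.sum_comm]
  exact Finset.sum_congr rfl fun i _ => Finset.sum_congr rfl fun j _ => by
    rw [hJ j i, real_inner_comm]

lemma hasDerivAt_energy {J : Matrix ι ι ℝ} (hJ : ∀ i j, J i j = J j i) (c : ι → E)
    {x : ι → ℝ → E} {v : ι → E} {t : ℝ} (hx : ∀ i, HasDerivAt (x i) (v i) t) :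
    HasDerivAt (fun s => energy J c (fun i => x i s))
      (-∑ i, ⟪v i, localField J c (fun i => x i t) i⟫) t := by
  have hquad := (HasDerivAt.fun_sum (u := .univ) fun i _ =>
    HasDerivAt.fun_sum (u := .univ) fun j _ =>
      ((hx i).inner ℝ (hx j)).const_mul (J i j)).const_mul (-(1 / 2) : ℝ)
  have hlin := HasDerivAt.fun_sum (u := .univ) fun i _ =>
    (hasDerivAt_const t (c i)).inner ℝ (hx i)
  refine (hquad.sub hlin).congr_deriv ?_
  simp only [inner_localField, inner_zero_left, add_zero, Finset.sum_add_distrib, mul_add,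
    sum_sum_mul_inner_comm hJ (fun i => x i t) v, real_inner_comm (c _)]
  ring

lemma sum_inner_localField_eq_zero_of_skew {J : Matrix ι ι ℝ} (hJ : ∀ i j, J i j = J j i)
    {A : E →ₗ[ℝ] E} (hA : ∀ u w, ⟪A u, w⟫ = -⟪u, A w⟫) {c : ι → E} (hAc : ∀ i, A (c i) = 0)
    (x : ι → E) : ∑ i, ⟪A (x i), localField J c x i⟫ = 0 := by
  simp only [inner_localField, hA _ (c _), hAc, inner_zero_right, neg_zero, zero_add]
  have hanti : ∑ i, ∑ j, J i j * ⟪A (x i), x j⟫ = -∑ i, ∑ j, J i j * ⟪A (x i), x j⟫ := by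
    have hA' (u w : E) : ⟪u, A w⟫ = -⟪A u, w⟫ := by rw [hA, neg_neg]
    conv_lhs => rw [sum_sum_mul_inner_comm hJ]; simp only [hA', mul_neg, Finset.sum_neg_distrib]
  linarith

lemma inner_sub_inner_smul_self_nonneg {x : E} (hx : ‖x‖ = 1) (y : E) :
    0 ≤ ⟪y - ⟪y, x⟫ • x, y⟫ := by
  have hcs : ⟪y, x⟫ * ⟪y, x⟫ ≤ ⟪y, y⟫ := by
    simpa [real_inner_self_eq_norm_sq, hx] using real_inner_mul_inner_self_le y x
  rw [inner_sub_left, real_inner_smul_left, real_inner_comm y x]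
  linarith

lemma sum_inner_velocity_localField_nonneg {J : Matrix ι ι ℝ} (hJ : ∀ i j, J i j = J j i)
    {A : E →ₗ[ℝ] E} (hA : ∀ u w, ⟪A u, w⟫ = -⟪u, A w⟫) {c : ι → E} (hAc : ∀ i, A (c i) = 0)
    {x : ι → E} (hx : ∀ i, ‖x i‖ = 1) :
    0 ≤ ∑ i, ⟪velocity A J c x i, localField J c x i⟫ := by
  simp only [velocity, inner_add_left, Finset.sum_add_distrib,
    sum_inner_localField_eq_zero_of_skew hJ hA hAc, zero_add]
  exact Finset.sum_nonneg fun i _ => inner_sub_inner_smul_self_nonneg (hx i) _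

end Kuramoto

lemma Matrix.inner_toEuclideanLin_of_transpose_eq_neg {N : ℕ}
    {Ω : Matrix (Fin N) (Fin N) ℝ} (hΩ : Ωᵀ = -Ω) (u w : EuclideanSpace ℝ (Fin N)) :
    ⟪toEuclideanLin Ω u, w⟫ = -⟪u, toEuclideanLin Ω w⟫ := by
  rw [← LinearMap.adjoint_inner_right, ← toEuclideanLin_conjTranspose_eq_adjoint,
    conjTranspose_eq_transpose_of_trivial, hΩ, map_neg, LinearMap.neg_apply, inner_neg_right]

/-- Lyapunov property of the generalized Kuramoto model: under the symmetry
assumptions the energy is non-increasing along trajectories. -/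
theorem stmt6 {C N : ℕ} (J : Matrix (Fin C) (Fin C) ℝ) (hJ : ∀ i j, J i j = J j i)
    (Ω : Matrix (Fin N) (Fin N) ℝ) (hΩ : Ωᵀ = -Ω)
    (c : Fin C → EuclideanSpace ℝ (Fin N))
    (hΩc : ∀ i, Matrix.toEuclideanLin Ω (c i) = 0)
    (x : Fin C → ℝ → EuclideanSpace ℝ (Fin N))
    (hnorm : ∀ i t, ‖x i t‖ = 1)
    (hode : ∀ i (t : ℝ), HasDerivAt (x i)
      (Matrix.toEuclideanLin Ω (x i t) +
        ((c i + ∑ j, J i j • x j t) -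
          ⟪c i + ∑ j, J i j • x j t, x i t⟫ • x i t)) t) :
    Antitone (fun t : ℝ =>
      -(1 / 2) * ∑ i, ∑ j, J i j * ⟪x i t, x j t⟫ - ∑ i, ⟪c i, x i t⟫) := by
  have hderiv (t : ℝ) := Kuramoto.hasDerivAt_energy hJ c
    (v := Kuramoto.velocity (toEuclideanLin Ω) J c (fun i => x i t)) (hode · t)
  refine antitone_of_hasDerivAt_nonpos hderiv fun t => neg_nonpos.mpr ?_
  exact Kuramoto.sum_inner_velocity_localField_nonneg hJ
    (inner_toEuclideanLin_of_transpose_eq_neg hΩ) hΩc (hnorm · t)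
end

section
/- Under the assumptions of Proposition 1 (block matrix J symmetric, block matrix Ω block-diagonal and antisymmetric, Ω_i c_i = 0 for all i), the time derivative of the energy E(x) = -(1/2) xᵀ J x - cᵀ x along trajectories of ẋ = Ωx + P(c + Jx), where P is the block-diagonal orthogonal projector with blocks I - x_i x_iᵀ, equals -(1/2) xᵀ [J,Ω] x - yᵀ P y with y = c + Jx. In particular dE/dt ≤ 0 whenever the commutator [J,Ω] = JΩ - ΩJ is positive semi-definite. -/
/-!
Writing `y = c + Jx`, the chain rule and the symmetry of `J` give `dE/dt = -y ⬝ ẋ`. Along the flow,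
`y ⬝ Ωx = (Jx) ⬝ Ωx` because `c ⬝ Ωx = -(Ωc) ⬝ x = 0`, and skew-symmetry of `Ω` turns
`(Jx) ⬝ Ωx` into `(1/2) xᵀ[J,Ω]x`. The term `yᵀPy` is non-negative because on each block it is
`|y_i|² - (x_i ⬝ y_i)²`, which is non-negative by Cauchy–Schwarz since `|x_i| = 1`.
-/

open Matrix

section Derivatives

variable {ι m : Type*} [Fintype ι] {f g : ℝ → ι → ℝ} {f' g' : ι → ℝ} {t : ℝ}

theorem HasDerivAt.dotProduct (hf : HasDerivAt f f' t) (hg : HasDerivAt g g' t) :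
    HasDerivAt (fun s => f s ⬝ᵥ g s) (f' ⬝ᵥ g t + f t ⬝ᵥ g') t := by
  simp only [_root_.dotProduct, ← Finset.sum_add_distrib]
  exact HasDerivAt.fun_sum fun k _ => (hasDerivAt_pi.1 hf k).mul (hasDerivAt_pi.1 hg k)

theorem HasDerivAt.mulVec (A : Matrix m ι ℝ) (hf : HasDerivAt f f' t) :
    HasDerivAt (fun s => A *ᵥ f s) (A *ᵥ f') t :=
  hasDerivAt_pi.2 fun k =>
    ((hasDerivAt_const t (A k)).dotProduct hf).congr_deriv (by rw [zero_dotProduct, zero_add]; rfl)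

end Derivatives

section Forms

variable {ι : Type*} [Fintype ι] {J Ω : Matrix ι ι ℝ}

theorem dotProduct_mulVec_comm_of_transpose_eq (hJ : Jᵀ = J) (u v : ι → ℝ) :
    u ⬝ᵥ J *ᵥ v = v ⬝ᵥ J *ᵥ u := by
  rw [dotProduct_mulVec, ← mulVec_transpose, hJ, dotProduct_comm]

theorem dotProduct_mulVec_of_transpose_eq_neg (hΩ : Ωᵀ = -Ω) (u v : ι → ℝ) :
    u ⬝ᵥ Ω *ᵥ v = -(v ⬝ᵥ Ω *ᵥ u) := by
  rw [dotProduct_mulVec, ← mulVec_transpose, hΩ, neg_mulVec, neg_dotProduct, dotProduct_comm]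

theorem dotProduct_mulVec_commutator (hJ : Jᵀ = J) (hΩ : Ωᵀ = -Ω) (x : ι → ℝ) :
    x ⬝ᵥ (J * Ω - Ω * J) *ᵥ x = 2 * (J *ᵥ x ⬝ᵥ Ω *ᵥ x) := by
  rw [sub_mulVec, dotProduct_sub, ← mulVec_mulVec, ← mulVec_mulVec,
    dotProduct_mulVec_comm_of_transpose_eq hJ, dotProduct_mulVec_of_transpose_eq_neg hΩ,
    dotProduct_comm (Ω *ᵥ x)]
  ring

theorem hasDerivAt_energy (hJ : Jᵀ = J) (c : ι → ℝ) {x : ℝ → ι → ℝ} {v : ι → ℝ} {t : ℝ}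
    (hx : HasDerivAt x v t) :
    HasDerivAt (fun s => -(1 / 2) * (x s ⬝ᵥ J *ᵥ x s) - c ⬝ᵥ x s)
      (-((c + J *ᵥ x t) ⬝ᵥ v)) t := by
  refine (((hx.dotProduct (hx.mulVec J)).const_mul (-(1 / 2))).sub
    ((hasDerivAt_const t c).dotProduct hx)).congr_deriv ?_
  rw [dotProduct_mulVec_comm_of_transpose_eq hJ (x t), add_dotProduct,
    dotProduct_comm (J *ᵥ x t)]
  simp only [zero_dotProduct]
  ring

end Forms

section Projector

variable {β κ : Type*} [Fintype β] [Fintype κ] [DecidableEq β] [DecidableEq κ]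

def blockProjector (x : β × κ → ℝ) : Matrix (β × κ) (β × κ) ℝ :=
  of fun p q => if p.1 = q.1 then (if p.2 = q.2 then 1 else 0) - x p * x q else 0

theorem blockProjector_mulVec_apply (x y : β × κ → ℝ) (i : β) (a : κ) :
    (blockProjector x *ᵥ y) (i, a) = y (i, a) - x (i, a) * ∑ b, x (i, b) * y (i, b) := by
  rw [mulVec, dotProduct, Fintype.sum_prod_type,
    Finset.sum_eq_single i (fun j _ hj => by simp [blockProjector, Ne.symm hj]) (by simp)]
  simp only [blockProjector, of_apply, if_true, sub_mul, ite_mul, one_mul, zero_mul,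
    Finset.sum_sub_distrib, Finset.sum_ite_eq, Finset.mem_univ, Finset.mul_sum, mul_assoc]

theorem dotProduct_blockProjector_mulVec_nonneg {x : β × κ → ℝ}
    (hx : ∀ i, ∑ a, x (i, a) * x (i, a) = 1) (y : β × κ → ℝ) :
    0 ≤ y ⬝ᵥ blockProjector x *ᵥ y := by
  have hblock : ∀ i, ∑ a, y (i, a) * (blockProjector x *ᵥ y) (i, a)
      = ∑ a, y (i, a) ^ 2 - (∑ a, x (i, a) * y (i, a)) ^ 2 := by
    intro i
    simp only [blockProjector_mulVec_apply, mul_sub, Finset.sum_sub_distrib, sq, Finset.sum_mul]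
    congr 1
    exact Finset.sum_congr rfl fun a _ => by ring
  rw [dotProduct, Fintype.sum_prod_type]
  refine Finset.sum_nonneg fun i _ => hblock i ▸ sub_nonneg.2 ?_
  calc (∑ a, x (i, a) * y (i, a)) ^ 2
      ≤ (∑ a, x (i, a) ^ 2) * ∑ a, y (i, a) ^ 2 := Finset.sum_mul_sq_le_sq_mul_sq _ _ _
    _ = ∑ a, y (i, a) ^ 2 := by simp only [sq, hx, one_mul]

end Projector

theorem stmt7_general {C N : ℕ}
    (J Ω : Matrix (Fin C × Fin N) (Fin C × Fin N) ℝ)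
    (hJ : Jᵀ = J) (hΩ : Ωᵀ = -Ω)
    (c : Fin C × Fin N → ℝ) (hΩc : Ω.mulVec c = 0)
    (x : ℝ → (Fin C × Fin N → ℝ))
    (hunit : ∀ (t : ℝ) (i : Fin C), ∑ a, x t (i, a) * x t (i, a) = 1)
    (P : ℝ → Matrix (Fin C × Fin N) (Fin C × Fin N) ℝ)
    (hP : ∀ (t : ℝ) (i j : Fin C) (a b : Fin N),
      P t (i, a) (j, b) =
        if i = j then (if a = b then (1 : ℝ) else 0) - x t (i, a) * x t (j, b) else 0)
    (hode : ∀ t : ℝ, HasDerivAt x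
      (Ω.mulVec (x t) + (P t).mulVec (c + J.mulVec (x t))) t) :
    (∀ t : ℝ, HasDerivAt (fun s => -(1 / 2) * (x s ⬝ᵥ J.mulVec (x s)) - c ⬝ᵥ x s)
      (-(1 / 2) * (x t ⬝ᵥ (J * Ω - Ω * J).mulVec (x t)) -
        (c + J.mulVec (x t)) ⬝ᵥ (P t).mulVec (c + J.mulVec (x t))) t) ∧
    ((J * Ω - Ω * J).PosSemidef →
      Antitone fun t : ℝ => -(1 / 2) * (x t ⬝ᵥ J.mulVec (x t)) - c ⬝ᵥ x t) := by
  have hderiv : ∀ t : ℝ, HasDerivAt (fun s => -(1 / 2) * (x s ⬝ᵥ J.mulVec (x s)) - c ⬝ᵥ x s)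
      (-(1 / 2) * (x t ⬝ᵥ (J * Ω - Ω * J).mulVec (x t)) -
        (c + J.mulVec (x t)) ⬝ᵥ (P t).mulVec (c + J.mulVec (x t))) t := by
    intro t
    have hc : c ⬝ᵥ Ω *ᵥ x t = 0 := by
      rw [dotProduct_mulVec_of_transpose_eq_neg hΩ, hΩc, dotProduct_zero, neg_zero]
    refine (hasDerivAt_energy hJ c (hode t)).congr_deriv ?_
    rw [dotProduct_mulVec_commutator hJ hΩ, dotProduct_add (c + J *ᵥ x t),
      add_dotProduct c (J *ᵥ x t) (Ω *ᵥ x t), hc]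
    ring
  refine ⟨hderiv, fun hpsd => antitone_of_hasDerivAt_nonpos hderiv fun t => ?_⟩
  have hcomm : 0 ≤ x t ⬝ᵥ (J * Ω - Ω * J) *ᵥ x t := by
    simpa using hpsd.dotProduct_mulVec_nonneg (x t)
  have hPt : P t = blockProjector (x t) := by
    ext ⟨i, a⟩ ⟨j, b⟩
    exact hP t i j a b
  have hproj := dotProduct_blockProjector_mulVec_nonneg (hunit t) (c + J *ᵥ x t)
  rw [← hPt] at hproj
  rw [Pi.zero_apply]
  linarith

/-- Under the assumptions of Proposition 1 (block matrix `J` symmetric, block matrix `Ω`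
block-diagonal and antisymmetric, `Ω c = 0`), the time derivative of the energy
`E(x) = -(1/2) xᵀ J x - cᵀ x` along trajectories of `ẋ = Ωx + P(c + Jx)` equals
`-(1/2) xᵀ [J,Ω] x - yᵀ P y` with `y = c + Jx`; in particular `E` is non-increasing
whenever `[J,Ω]` is positive semi-definite. -/
theorem stmt7 {C N : ℕ}
    (J Ω : Matrix (Fin C × Fin N) (Fin C × Fin N) ℝ)
    (hJ : Jᵀ = J) (hΩ : Ωᵀ = -Ω)
    (hΩblock : ∀ (i j : Fin C) (a b : Fin N), i ≠ j → Ω (i, a) (j, b) = 0)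
    (c : Fin C × Fin N → ℝ) (hΩc : Ω.mulVec c = 0)
    (x : ℝ → (Fin C × Fin N → ℝ))
    (hunit : ∀ (t : ℝ) (i : Fin C), ∑ a, x t (i, a) * x t (i, a) = 1)
    (P : ℝ → Matrix (Fin C × Fin N) (Fin C × Fin N) ℝ)
    (hP : ∀ (t : ℝ) (i j : Fin C) (a b : Fin N),
      P t (i, a) (j, b) =
        if i = j then (if a = b then (1 : ℝ) else 0) - x t (i, a) * x t (j, b) else 0)
    (hode : ∀ t : ℝ, HasDerivAt x
      (Ω.mulVec (x t) + (P t).mulVec (c + J.mulVec (x t))) t) :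
    (∀ t : ℝ, HasDerivAt (fun s => -(1 / 2) * (x s ⬝ᵥ J.mulVec (x s)) - c ⬝ᵥ x s)
      (-(1 / 2) * (x t ⬝ᵥ (J * Ω - Ω * J).mulVec (x t)) -
        (c + J.mulVec (x t)) ⬝ᵥ (P t).mulVec (c + J.mulVec (x t))) t) ∧
    ((J * Ω - Ω * J).PosSemidef →
      Antitone fun t : ℝ => -(1 / 2) * (x t ⬝ᵥ J.mulVec (x t)) - c ⬝ᵥ x t) :=
  stmt7_general J Ω hJ hΩ c hΩc x hunit P hP hode
end
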